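/- Let D = diag(λ_1, …, λ_n) with λ_1 ≥ ⋯ ≥ λ_{n-1} > λ_n ≥ 0, eigengap g = λ_{n-1} − λ_n, u ∈ ℝⁿ, and z = e_n. Then λ_min(D + u uᵀ) ≥ λ_n + (1/2)(g + ‖u‖₂² − sqrt((g + ‖u‖₂²)² − 4 g (zᵀu)²)). -/

import Mathlib

open Matrix

/-- Smallest eigenvalue of a real symmetric matrix, characterized as the infimum of the
Rayleigh quotient over the unit sphere. -/
noncomputable def lamMin {m : ℕ} (A : Matrix (Fin m) (Fin m) ℝ) : ℝ :=
  sInf {r | ∃ x : Fin m → ℝ, (∑ i, x i ^ 2) = 1 ∧ r = ∑ i, ∑ j, x i * A i j * x j}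

set_option maxHeartbeats 1600000 in
/-- Ipsen–Nadler bound: for `D = diag(λ₁, …, λ_n)` with `λ₁ ≥ ⋯ ≥ λ_{n-1} > λ_n ≥ 0`,
eigengap `g = λ_{n-1} - λ_n`, `u ∈ ℝⁿ` and `z = e_n`, the smallest eigenvalue of
`D + u uᵀ` is at least
`λ_n + (1/2)(g + ‖u‖² - √((g + ‖u‖²)² - 4 g (zᵀu)²))`. -/
theorem lamMin_rank_one_update_ipsen_bound {n : ℕ}
    (lam : Fin (n + 2) → ℝ) (hmono : Antitone lam)
    (hgap : lam (Fin.last (n + 1)) < lam ⟨n, by omega⟩)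
    (hnn : 0 ≤ lam (Fin.last (n + 1)))
    (u : Fin (n + 2) → ℝ)
    (g : ℝ) (hg : g = lam ⟨n, by omega⟩ - lam (Fin.last (n + 1)))
    (z : Fin (n + 2) → ℝ) (hz : z = Pi.single (Fin.last (n + 1)) 1) :
    lam (Fin.last (n + 1)) + (1 / 2) * (g + ∑ i, u i ^ 2 -
        Real.sqrt ((g + ∑ i, u i ^ 2) ^ 2 - 4 * g * (∑ i, z i * u i) ^ 2))
      ≤ lamMin (Matrix.diagonal lam + Matrix.vecMulVec u u) := by
  have hgpos : 0 < g := by rw [hg]; linarith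
  set N : Fin (n + 2) := Fin.last (n + 1) with hN
  set c : ℝ := u N with hc
  -- z ᵀ u = c
  have hzu : (∑ i, z i * u i) = c := by
    subst hz
    rw [Finset.sum_eq_single N]
    · simp [hc]
    · intro b _ hb; simp [Pi.single_apply, hb]
    · simp
  set U : ℝ := ∑ i, u i ^ 2 with hUdef
  set b2 : ℝ := ∑ i : Fin (n + 1), u i.castSucc ^ 2 with hb2def
  have hb2 : 0 ≤ b2 := Finset.sum_nonneg fun i _ => sq_nonneg _
  have hU : U = b2 + c ^ 2 := by
    rw [hUdef, Fin.sum_univ_castSucc]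
  set T : ℝ := g + U with hT
  set Δ : ℝ := T ^ 2 - 4 * g * c ^ 2 with hΔdef
  have hΔ : 0 ≤ Δ := by
    rw [hΔdef, hT, hU]
    nlinarith [sq_nonneg (g - c ^ 2), sq_nonneg c, mul_nonneg hgpos.le hb2, sq_nonneg b2,
      mul_nonneg hb2 (sq_nonneg c)]
  set R : ℝ := Real.sqrt Δ with hRdef
  have hR0 : 0 ≤ R := Real.sqrt_nonneg _
  have hR2 : R ^ 2 = Δ := Real.sq_sqrt hΔ
  set B : ℝ := (1 : ℝ) / 2 * (T - R) with hB
  -- key scalar facts about B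
  have hK : B ≤ c ^ 2 := by
    have h1 : (T - 2 * c ^ 2) ^ 2 ≤ Δ := by
      have : Δ - (T - 2 * c ^ 2) ^ 2 = 4 * c ^ 2 * b2 := by rw [hΔdef, hT, hU]; ring
      nlinarith [mul_nonneg (sq_nonneg c) hb2]
    have h2 : T - 2 * c ^ 2 ≤ R := Real.le_sqrt_of_sq_le h1
    rw [hB]; linarith
  have hG : B ≤ g := by
    have h1 : (U - g) ^ 2 ≤ Δ := by
      have : Δ - (U - g) ^ 2 = 4 * g * b2 := by rw [hΔdef, hT, hU]; ring
      nlinarith [mul_nonneg hgpos.le hb2]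
    have h2 : U - g ≤ R := Real.le_sqrt_of_sq_le h1
    rw [hB, hT]; linarith
  have hId : B ^ 2 - B * T + g * c ^ 2 = 0 := by
    rw [hB]
    linear_combination (1 / 4 : ℝ) * hR2 + (1 / 4 : ℝ) * hΔdef
  have hzuC : lam N + 1 / 2 * (g + ∑ i, u i ^ 2 -
      Real.sqrt ((g + ∑ i, u i ^ 2) ^ 2 - 4 * g * (∑ i, z i * u i) ^ 2)) = lam N + B := by
    rw [hzu, hB, hT, hUdef]
  rw [hzuC]
  -- now bound the infimum
  apply le_csInf
  · refine ⟨_, Pi.single (0 : Fin (n + 2)) 1, ?_, rfl⟩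
    rw [Finset.sum_eq_single (0 : Fin (n + 2))]
    · simp
    · intro b _ hb; simp [Pi.single_apply, hb]
    · simp
  rintro r ⟨x, hx1, rfl⟩
  -- compute the quadratic form
  have hr : (∑ i, ∑ j, x i * (Matrix.diagonal lam + Matrix.vecMulVec u u) i j * x j)
      = ∑ i, lam i * x i ^ 2 + (∑ i, u i * x i) ^ 2 := by
    have h1 : ∀ i : Fin (n + 2),
        (∑ j, x i * (Matrix.diagonal lam + Matrix.vecMulVec u u) i j * x j)
        = lam i * x i ^ 2 + (u i * x i) * ∑ j, u j * x j := by
      intro i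
      have h2 : ∀ j, x i * (Matrix.diagonal lam + Matrix.vecMulVec u u) i j * x j
          = (if j = i then lam i * x i ^ 2 else 0) + (u i * x i) * (u j * x j) := by
        intro j
        by_cases h : i = j
        · subst h; simp [Matrix.diagonal_apply_eq, Matrix.vecMulVec_apply]; ring
        · simp [Matrix.diagonal_apply_ne _ h, Matrix.vecMulVec_apply, Ne.symm h]; ring
      rw [Finset.sum_congr rfl fun j _ => h2 j, Finset.sum_add_distrib,
        Finset.sum_ite_eq' Finset.univ i (fun _ => lam i * x i ^ 2), ← Finset.mul_sum]
      simp
    rw [Finset.sum_congr rfl fun i _ => h1 i, Finset.sum_add_distrib, ← Finset.sum_mul, pow_two]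
  rw [hr]
  set a : ℝ := x N with ha
  set s : ℝ := ∑ i : Fin (n + 1), x i.castSucc ^ 2 with hsdef
  have hs : 0 ≤ s := Finset.sum_nonneg fun i _ => sq_nonneg _
  have hx1' : s + a ^ 2 = 1 := by
    rw [hsdef, ← Fin.sum_univ_castSucc fun i => x i ^ 2]
    exact hx1
  set p : ℝ := ∑ i : Fin (n + 1), u i.castSucc * x i.castSucc with hp
  have hux : (∑ i, u i * x i) = p + c * a := by
    rw [Fin.sum_univ_castSucc fun i => u i * x i]
  have hCS : p ^ 2 ≤ b2 * s :=
    Finset.sum_mul_sq_le_sq_mul_sq Finset.univ (fun i : Fin (n+1) => u i.castSucc) (fun i : Fin (n+1) => x i.castSucc)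
  -- lower bound for the diagonal part
  have hlam : (lam N + g) * s + lam N * a ^ 2 ≤ ∑ i, lam i * x i ^ 2 := by
    rw [Fin.sum_univ_castSucc fun i => lam i * x i ^ 2]
    have hstep : (lam N + g) * s ≤ ∑ i : Fin (n + 1), lam i.castSucc * x i.castSucc ^ 2 := by
      rw [Finset.mul_sum]
      refine Finset.sum_le_sum fun i _ => ?_
      refine mul_le_mul_of_nonneg_right ?_ (sq_nonneg _)
      have hle : i.castSucc ≤ (⟨n, by omega⟩ : Fin (n + 2)) := by
        rw [Fin.le_def]; simpa using Nat.lt_succ_iff.mp i.isLt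
      have := hmono hle
      linarith [hg ▸ le_refl g]
    linarith
  rw [hux]
  -- main inequality
  have hKey : 0 ≤ (c ^ 2 - B) * a ^ 2 + (g - B) * s + 2 * c * a * p + p ^ 2 := by
    set K : ℝ := c ^ 2 - B with hKd
    set G : ℝ := g - B with hGd
    have hKnn : 0 ≤ K := by rw [hKd]; linarith
    have hGnn : 0 ≤ G := by rw [hGd]; linarith
    have hIdent : K * (G + b2) = c ^ 2 * b2 := by
      have hTb : T = g + (b2 + c ^ 2) := by rw [hT, hU]
      rw [hKd, hGd]
      linear_combination hId + B * hTb
    rcases eq_or_lt_of_le hb2 with hb0 | hb0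
    · -- b2 = 0 ⇒ p = 0
      have hp0 : p = 0 := by
        have h : p ^ 2 ≤ 0 := by rw [← hb0] at hCS; simpa using hCS
        have h2 : p ^ 2 = 0 := le_antisymm h (sq_nonneg p)
        exact (pow_eq_zero_iff two_ne_zero).mp h2
      rw [hp0]
      have t3 : (0:ℝ) ≤ K * a ^ 2 + G * s :=
        add_nonneg (mul_nonneg hKnn (sq_nonneg a)) (mul_nonneg hGnn hs)
      linarith only [t3]
    · rcases eq_or_lt_of_le hKnn with hK0 | hK0
      · -- K = 0 ⇒ c = 0
        have hc0 : c ^ 2 = 0 := by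
          have h : c ^ 2 * b2 = 0 := by rw [← hIdent, ← hK0]; ring
          rcases mul_eq_zero.mp h with h' | h'
          · exact h'
          · exact absurd h' (ne_of_gt hb0)
        have hcc : c = 0 := (pow_eq_zero_iff two_ne_zero).mp hc0
        rw [← hK0, hcc]
        have t3 : (0:ℝ) ≤ G * s + p ^ 2 :=
          add_nonneg (mul_nonneg hGnn hs) (sq_nonneg p)
        linarith only [t3]
      · -- K > 0
        have h1 : 0 ≤ b2 * (K * a + c * p) ^ 2 := mul_nonneg hb0.le (sq_nonneg _)
        have h2 : 0 ≤ K * G * (b2 * s - p ^ 2) :=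
          mul_nonneg (mul_nonneg hK0.le hGnn) (by linarith)
        have h3 : K * b2 * (K * a ^ 2 + G * s + 2 * c * a * p + p ^ 2)
            = b2 * (K * a + c * p) ^ 2 + K * G * (b2 * s - p ^ 2) := by
          linear_combination p ^ 2 * hIdent
        have h4 : 0 ≤ K * b2 * (K * a ^ 2 + G * s + 2 * c * a * p + p ^ 2) := by
          rw [h3]; linarith
        have h5 : 0 < K * b2 := mul_pos hK0 hb0
        exact nonneg_of_mul_nonneg_right h4 h5
  have hfin : lam N + B = (lam N + g) * s + lam N * a ^ 2 + (p + c * a) ^ 2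
      - ((c ^ 2 - B) * a ^ 2 + (g - B) * s + 2 * c * a * p + p ^ 2) := by
    linear_combination (-(lam N) - B) * hx1'
  linarith [hKey, hlam, hfin]
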